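/- arXiv:1304.0189 — 3 statements merged into one kernel-verified Lean document; each statement's English description precedes it below -/
import Mathlib

section
/- Let ν ∈ (0,1], μ > 0, n₀ ≥ 1, and E_ν the Mittag-Leffler function E_{ν,1}. Define p_k^ν(t) = C(n₀,k) ∑_{r=0}^{n₀-k} C(n₀-k,r)(-1)^r E_ν(-(k+r)μ t^ν) for 0 ≤ k ≤ n₀. Then ∑_{k=0}^{n₀} p_k^ν(t) = 1 for every t > 0. -/
/-!
Substituting `X ^ m ↦ E (-(m μ t^ν))` is an `ℝ`-linear functional on `ℝ[X]`, and it sends the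
Bernstein polynomial `C(n₀,k) X^k (1 - X)^(n₀-k)` to `p_k^ν(t)`. The Bernstein polynomials of
degree `n₀` sum to `(X + (1 - X))^n₀ = 1`, so the probabilities sum to the image of `1`, which is
`E 0 = 1`.
-/

open Finset Polynomial

namespace Polynomial

variable {R : Type*} [CommRing R]

noncomputable def umbral (f : ℕ → R) : R[X] →ₗ[R] R :=
  lsum fun m => f m • LinearMap.id

theorem umbral_C_mul_X_pow (f : ℕ → R) (a : R) (m : ℕ) : umbral f (C a * X ^ m) = a * f m := by
  rw [C_mul_X_pow_eq_monomial, umbral, lsum_apply, sum_monomial_index _ _ (by simp)]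
  simp [mul_comm]

theorem umbral_one (f : ℕ → R) : umbral f 1 = f 0 := by
  simpa using umbral_C_mul_X_pow f 1 0

theorem one_sub_X_pow_eq_sum (m : ℕ) :
    (1 - X : R[X]) ^ m = ∑ r ∈ range (m + 1), C ((m.choose r : R) * (-1) ^ r) * X ^ r := by
  rw [sub_eq_neg_add, add_pow]
  refine sum_congr rfl fun r _ => ?_
  rw [neg_pow, one_pow, mul_one, C_mul, C_pow, C_neg, C_1, map_natCast]
  ring

theorem umbral_bernsteinPolynomial (f : ℕ → R) (n k : ℕ) :
    umbral f (bernsteinPolynomial R n k) =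
      n.choose k * ∑ r ∈ range (n - k + 1), ((n - k).choose r : R) * (-1) ^ r * f (k + r) := by
  rw [bernsteinPolynomial, one_sub_X_pow_eq_sum, mul_sum, mul_sum, map_sum]
  refine sum_congr rfl fun r _ => ?_
  rw [show (n.choose k : R[X]) * X ^ k * (C (((n - k).choose r : R) * (-1) ^ r) * X ^ r) =
      C ((n.choose k : R) * ((n - k).choose r * (-1) ^ r)) * X ^ (k + r) by
    simp only [C_mul, map_natCast, pow_add]; ring, umbral_C_mul_X_pow]
  ring

theorem sum_choose_mul_alternating_sum (f : ℕ → R) (n : ℕ) :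
    ∑ k ∈ range (n + 1), (n.choose k : R) *
        ∑ r ∈ range (n - k + 1), ((n - k).choose r : R) * (-1) ^ r * f (k + r) = f 0 := by
  simp only [← umbral_bernsteinPolynomial, ← map_sum, bernsteinPolynomial.sum, umbral_one]

end Polynomial

theorem tsum_zero_pow_div_Gamma (ν : ℝ) : ∑' h : ℕ, (0 : ℝ) ^ h / Real.Gamma (ν * h + 1) = 1 := by
  rw [tsum_eq_single 0 fun h hh => by simp [zero_pow hh]]
  simp

theorem stmt_10_general (ν : ℝ) (μ : ℝ)
    (n₀ : ℕ)
    (E : ℝ → ℝ) (hE : ∀ x, E x = ∑' h : ℕ, x ^ h / Real.Gamma (ν * h + 1))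
    (t : ℝ) :
    ∑ k ∈ Finset.range (n₀ + 1), (n₀.choose k : ℝ) *
        ∑ r ∈ Finset.range (n₀ - k + 1),
          ((n₀ - k).choose r : ℝ) * (-1) ^ r * E (-(((k : ℝ) + r) * μ * t ^ ν)) =
      1 := by
  have hE0 : E 0 = 1 := by rw [hE, tsum_zero_pow_div_Gamma]
  have hsum := sum_choose_mul_alternating_sum (fun j : ℕ => E (-(j * μ * t ^ ν))) n₀
  push_cast at hsum
  simpa [hE0] using hsum

theorem stmt_10 (ν : ℝ) (hν : ν ∈ Set.Ioc (0 : ℝ) 1) (μ : ℝ) (hμ : 0 < μ)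
    (n₀ : ℕ) (hn : 1 ≤ n₀)
    (E : ℝ → ℝ) (hE : ∀ x, E x = ∑' h : ℕ, x ^ h / Real.Gamma (ν * h + 1))
    (t : ℝ) (ht : 0 < t) :
    ∑ k ∈ Finset.range (n₀ + 1), (n₀.choose k : ℝ) *
        ∑ r ∈ Finset.range (n₀ - k + 1),
          ((n₀ - k).choose r : ℝ) * (-1) ^ r * E (-(((k : ℝ) + r) * μ * t ^ ν)) =
      1 :=
  stmt_10_general ν μ n₀ E hE t
end

section
/- Let ν ∈ (0,1], μ > 0, n₀ ≥ 1, and E_ν = E_{ν,1}. With p_k^ν(t) = C(n₀,k) ∑_{r=0}^{n₀-k} C(n₀-k,r)(-1)^r E_ν(-(k+r)μ t^ν) (linear death) and 𝔭_k^ν(t) = ∑_{l=0}^{n₀-k} C(n₀-k,l)(-1)^l E_ν(-(l+1)μ t^ν) (sublinear death), one has ∑_{k=1}^{n₀} p_k^ν(t) = ∑_{k=1}^{n₀} 𝔭_k^ν(t) = -∑_{k=1}^{n₀} C(n₀,k)(-1)^k E_ν(-μ k t^ν) for all t > 0. -/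
/-!
Only the values `g m = E (-(m μ t^ν))` enter, and both identities hold for an arbitrary sequence
`g`. In the linear-death sum, collect the coefficient of `g m`: since
`C(n,k) C(n-k,m-k) = C(n,m) C(m,k)`, it is `C(n,m)` times `∑_{k=1}^m C(m,k) (-1)^(m-k) = -(-1)^m`.
In the sublinear-death sum, put `j = n - k`; the coefficient of `g (l+1)` is then
`(-1)^l ∑_{j<n} C(j,l) = (-1)^l C(n,l+1)` by the hockey-stick identity.
-/

open Finset

theorem sum_Icc_one_eq_sum_range {M : Type*} [AddCommMonoid M] (f : ℕ → M) (n : ℕ) :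
    ∑ k ∈ Icc 1 n, f k = ∑ k ∈ range n, f (k + 1) := by
  rw [← Ico_add_one_right_eq_Icc, sum_Ico_eq_sum_range, add_tsub_cancel_right]
  simp only [add_comm]

theorem sum_Icc_one_sub_eq_sum_range {M : Type*} [AddCommMonoid M] (f : ℕ → M) (n : ℕ) :
    ∑ k ∈ Icc 1 n, f (n - k) = ∑ k ∈ range n, f k := by
  rw [sum_Icc_one_eq_sum_range, ← sum_range_reflect f n]
  exact sum_congr rfl fun k _ ↦ by rw [Nat.sub_sub, add_comm 1 k]

section

variable {R : Type*} [CommRing R]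

theorem sum_Icc_one_choose_mul_neg_one_pow_sub {m : ℕ} (hm : 1 ≤ m) :
    ∑ k ∈ Icc 1 m, (m.choose k : R) * (-1) ^ (m - k) = -(-1) ^ m := by
  have h := add_pow (1 : R) (-1) m
  rw [add_neg_cancel, zero_pow (by omega), sum_range_succ'] at h
  rw [sum_Icc_one_eq_sum_range]
  simp only [one_pow, one_mul, Nat.choose_zero_right, Nat.cast_one, mul_one, tsub_zero] at h
  simp only [mul_comm (m.choose _ : R)]
  linear_combination -h

theorem sum_Icc_one_choose_mul_choose_sub_mul_neg_one_pow {n m : ℕ} (hm : 1 ≤ m) :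
    ∑ k ∈ Icc 1 m, (n.choose k : R) * ((n - k).choose (m - k) : R) * (-1) ^ (m - k) =
      -((n.choose m : R) * (-1) ^ m) := by
  have trinomial : ∀ k ∈ Icc 1 m, (n.choose k : R) * ((n - k).choose (m - k) : R) =
      n.choose m * m.choose k := fun k hk ↦ by
    exact_mod_cast congrArg (Nat.cast (R := R)) (Nat.choose_mul (mem_Icc.mp hk).2).symm
  rw [sum_congr rfl fun k hk ↦ by rw [trinomial k hk]]
  simp only [mul_assoc, ← mul_sum, sum_Icc_one_choose_mul_neg_one_pow_sub hm, mul_neg]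

theorem sum_Icc_one_choose_mul_sum_choose_sub (g : ℕ → R) (n : ℕ) :
    ∑ k ∈ Icc 1 n, (n.choose k : R) *
        ∑ r ∈ range (n - k + 1), ((n - k).choose r : R) * (-1) ^ r * g (k + r) =
      -∑ k ∈ Icc 1 n, (n.choose k : R) * (-1) ^ k * g k := by
  have reindex : ∀ k ∈ Ico 1 (n + 1),
      ∑ r ∈ range (n - k + 1), ((n - k).choose r : R) * (-1) ^ r * g (k + r) =
        ∑ m ∈ Ico k (n + 1), ((n - k).choose (m - k) : R) * (-1) ^ (m - k) * g m := by
    intro k hk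
    rw [sum_Ico_eq_sum_range, show n + 1 - k = n - k + 1 by grind]
    simp only [add_tsub_cancel_left]
  rw [← Ico_add_one_right_eq_Icc, sum_congr rfl fun k hk ↦ by rw [reindex k hk, mul_sum],
    sum_Ico_Ico_comm, ← sum_neg_distrib]
  refine sum_congr rfl fun m hm ↦ ?_
  rw [Ico_add_one_right_eq_Icc]
  simp only [← mul_assoc]
  rw [← sum_mul, sum_Icc_one_choose_mul_choose_sub_mul_neg_one_pow (mem_Ico.mp hm).1]
  ring

theorem sum_range_sum_choose_mul (a : ℕ → R) (n : ℕ) :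
    ∑ j ∈ range n, ∑ l ∈ range (j + 1), (j.choose l : R) * a l =
      ∑ l ∈ range n, (n.choose (l + 1) : R) * a l := by
  induction n with
  | zero => simp
  | succ n ih =>
    rw [sum_range_succ, ih]
    simp only [Nat.choose_succ_succ', Nat.cast_add, add_mul, sum_add_distrib]
    rw [sum_range_succ (fun l ↦ (n.choose (l + 1) : R) * a l), Nat.choose_succ_self,
      Nat.cast_zero, zero_mul, add_zero, add_comm]

theorem sum_Icc_one_sum_choose_sub (g : ℕ → R) (n : ℕ) :
    ∑ k ∈ Icc 1 n, ∑ l ∈ range (n - k + 1), ((n - k).choose l : R) * (-1) ^ l * g (l + 1) =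
      -∑ k ∈ Icc 1 n, (n.choose k : R) * (-1) ^ k * g k := calc
  _ = ∑ j ∈ range n, ∑ l ∈ range (j + 1), (j.choose l : R) * ((-1) ^ l * g (l + 1)) := by
    simp only [mul_assoc]
    exact sum_Icc_one_sub_eq_sum_range
      (fun j ↦ ∑ l ∈ range (j + 1), (j.choose l : R) * ((-1) ^ l * g (l + 1))) n
  _ = ∑ l ∈ range n, (n.choose (l + 1) : R) * ((-1) ^ l * g (l + 1)) :=
    sum_range_sum_choose_mul _ n
  _ = _ := by
    rw [sum_Icc_one_eq_sum_range, ← sum_neg_distrib]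
    exact sum_congr rfl fun l _ ↦ by ring

end

theorem stmt_12_general (ν : ℝ) (μ : ℝ)
    (n₀ : ℕ)
    (E : ℝ → ℝ)
    (t : ℝ) :
    (∑ k ∈ Finset.Icc 1 n₀, (n₀.choose k : ℝ) *
        ∑ r ∈ Finset.range (n₀ - k + 1),
          ((n₀ - k).choose r : ℝ) * (-1) ^ r * E (-(((k : ℝ) + r) * μ * t ^ ν)) =
      ∑ k ∈ Finset.Icc 1 n₀,
        ∑ l ∈ Finset.range (n₀ - k + 1),
          ((n₀ - k).choose l : ℝ) * (-1) ^ l * E (-(((l : ℝ) + 1) * μ * t ^ ν))) ∧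
    (∑ k ∈ Finset.Icc 1 n₀,
        ∑ l ∈ Finset.range (n₀ - k + 1),
          ((n₀ - k).choose l : ℝ) * (-1) ^ l * E (-(((l : ℝ) + 1) * μ * t ^ ν)) =
      -∑ k ∈ Finset.Icc 1 n₀, (n₀.choose k : ℝ) * (-1) ^ k * E (-(μ * k * t ^ ν))) := by
  set g : ℕ → ℝ := fun m ↦ E (-(m * μ * t ^ ν))
  have linear (k r : ℕ) : E (-(((k : ℝ) + r) * μ * t ^ ν)) = g (k + r) := by
    simp only [g, Nat.cast_add]
  have sublinear (l : ℕ) : E (-(((l : ℝ) + 1) * μ * t ^ ν)) = g (l + 1) := by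
    simp only [g, Nat.cast_add, Nat.cast_one]
  have direct (k : ℕ) : E (-(μ * k * t ^ ν)) = g k := by
    simp only [g, mul_comm μ]
  simp only [linear, sublinear, direct]
  exact ⟨(sum_Icc_one_choose_mul_sum_choose_sub g n₀).trans
    (sum_Icc_one_sum_choose_sub g n₀).symm, sum_Icc_one_sum_choose_sub g n₀⟩

theorem stmt_12 (ν : ℝ) (hν : ν ∈ Set.Ioc (0 : ℝ) 1) (μ : ℝ) (hμ : 0 < μ)
    (n₀ : ℕ) (hn : 1 ≤ n₀)
    (E : ℝ → ℝ) (hE : ∀ x, E x = ∑' h : ℕ, x ^ h / Real.Gamma (ν * h + 1))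
    (t : ℝ) (ht : 0 < t) :
    (∑ k ∈ Finset.Icc 1 n₀, (n₀.choose k : ℝ) *
        ∑ r ∈ Finset.range (n₀ - k + 1),
          ((n₀ - k).choose r : ℝ) * (-1) ^ r * E (-(((k : ℝ) + r) * μ * t ^ ν)) =
      ∑ k ∈ Finset.Icc 1 n₀,
        ∑ l ∈ Finset.range (n₀ - k + 1),
          ((n₀ - k).choose l : ℝ) * (-1) ^ l * E (-(((l : ℝ) + 1) * μ * t ^ ν))) ∧
    (∑ k ∈ Finset.Icc 1 n₀,
        ∑ l ∈ Finset.range (n₀ - k + 1),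
          ((n₀ - k).choose l : ℝ) * (-1) ^ l * E (-(((l : ℝ) + 1) * μ * t ^ ν)) =
      -∑ k ∈ Finset.Icc 1 n₀, (n₀.choose k : ℝ) * (-1) ^ k * E (-(μ * k * t ^ ν))) :=
  stmt_12_general ν μ n₀ E t
end

section
/- Let ν ∈ (0,1], μ > 0, n₀ ≥ 1, and E_ν = E_{ν,1}. Define 𝔭_k^ν as in the sublinear death process: 𝔭_k^ν(t) = ∑_{l=0}^{n₀-k} C(n₀-k,l)(-1)^l E_ν(-(l+1)μ t^ν) for 1 ≤ k ≤ n₀, 𝔭_0^ν(t) = ∑_{l=0}^{n₀} C(n₀,l)(-1)^l E_ν(-lμ t^ν). Then ∑_{k=0}^{n₀} k · 𝔭_k^ν(t) = ∑_{k=1}^{n₀} C(n₀+1, k+1)(-1)^{k+1} E_ν(-μ k t^ν) for all t > 0. -/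
/-!
The identity holds for any function `E`: swapping the two sums, the coefficient of
`(-1) ^ l * E (-(l + 1) μ t^ν)` becomes `∑ k, k * C(n₀ - k, l)`, which is `C(n₀ + 1, l + 2)` by
the hockey-stick identity applied twice.
-/

open Finset

namespace Nat

theorem sum_range_choose_sub (n m : ℕ) :
    ∑ k ∈ range (n + 1), (n - k).choose m = (n + 1).choose (m + 1) := by
  induction n with
  | zero => simp [choose_succ_succ]
  | succ n ih =>
    rw [sum_range_succ', Nat.sub_zero]
    simp only [Nat.add_sub_add_right, ih, choose_succ_succ' (n + 1) m]
    ring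

theorem sum_range_mul_choose_sub (n m : ℕ) :
    ∑ k ∈ range (n + 1), k * (n - k).choose m = (n + 1).choose (m + 2) := by
  induction n with
  | zero => simp [choose_eq_zero_of_lt]
  | succ n ih =>
    simp only [sum_range_succ' _ (n + 1), Nat.add_sub_add_right, add_mul, one_mul, sum_add_distrib,
      ih, sum_range_choose_sub, zero_mul, add_zero, choose_succ_succ' (n + 1) (m + 1)]
    ring

end Nat

theorem sum_mul_sum_choose_sub_mul_neg_one_pow {R : Type*} [CommRing R] (n : ℕ) (f : ℕ → R) :
    ∑ k ∈ Icc 1 n, (k : R) *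
        ∑ l ∈ range (n - k + 1), ((n - k).choose l : R) * (-1) ^ l * f (l + 1) =
      ∑ k ∈ Icc 1 n, ((n + 1).choose (k + 1) : R) * (-1) ^ (k + 1) * f k := by
  set a : ℕ → R := fun l => (-1) ^ l * f (l + 1)
  have inner_eq (k : ℕ) (hk : k ∈ Icc 1 n) :
      (k : R) * ∑ l ∈ range (n - k + 1), ((n - k).choose l : R) * (-1) ^ l * f (l + 1) =
        ∑ l ∈ range (n + 1), ((k * (n - k).choose l : ℕ) : R) * a l := by
    rw [mul_sum]
    refine sum_subset_zero_on_sdiff (range_subset_range.2 (by simp at hk; omega))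
      (fun l hl => ?_) (fun l _ => by push_cast; ring)
    simp only [mem_sdiff, mem_range] at hl
    simp [Nat.choose_eq_zero_of_lt (by omega : n - k < l)]
  calc _ = ∑ k ∈ range (n + 1), ∑ l ∈ range (n + 1), ((k * (n - k).choose l : ℕ) : R) * a l := by
        rw [sum_congr rfl inner_eq]
        refine sum_subset (fun k hk => by simp at hk ⊢; omega) (fun k hk hk' => ?_)
        obtain rfl : k = 0 := by simp at hk hk'; omega
        simp
    _ = ∑ l ∈ range (n + 1), ((n + 1).choose (l + 2) : R) * a l := by
        rw [sum_comm]
        simp only [← sum_mul, ← Nat.cast_sum, Nat.sum_range_mul_choose_sub]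
    _ = _ := by
        rw [sum_range_succ, Nat.choose_eq_zero_of_lt (by omega : n + 1 < n + 2), Nat.cast_zero,
          zero_mul, add_zero, ← Ico_add_one_right_eq_Icc, sum_Ico_eq_sum_range, Nat.add_sub_cancel]
        refine sum_congr rfl fun l _ => ?_
        simp only [a, add_comm 1 l, add_assoc, pow_add]
        ring

theorem stmt_13_general (ν : ℝ) (μ : ℝ)
    (n₀ : ℕ)
    (E : ℝ → ℝ)
    (t : ℝ) :
    ∑ k ∈ Finset.Icc 1 n₀, (k : ℝ) *
        ∑ l ∈ Finset.range (n₀ - k + 1),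
          ((n₀ - k).choose l : ℝ) * (-1) ^ l * E (-(((l : ℝ) + 1) * μ * t ^ ν)) =
      ∑ k ∈ Finset.Icc 1 n₀,
        ((n₀ + 1).choose (k + 1) : ℝ) * (-1) ^ (k + 1) * E (-(μ * k * t ^ ν)) := by
  convert sum_mul_sum_choose_sub_mul_neg_one_pow n₀ (fun j : ℕ => E (-(μ * j * t ^ ν))) using 6
  push_cast
  ring

theorem stmt_13 (ν : ℝ) (hν : ν ∈ Set.Ioc (0 : ℝ) 1) (μ : ℝ) (hμ : 0 < μ)
    (n₀ : ℕ) (hn : 1 ≤ n₀)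
    (E : ℝ → ℝ) (hE : ∀ x, E x = ∑' h : ℕ, x ^ h / Real.Gamma (ν * h + 1))
    (t : ℝ) (ht : 0 < t) :
    ∑ k ∈ Finset.Icc 1 n₀, (k : ℝ) *
        ∑ l ∈ Finset.range (n₀ - k + 1),
          ((n₀ - k).choose l : ℝ) * (-1) ^ l * E (-(((l : ℝ) + 1) * μ * t ^ ν)) =
      ∑ k ∈ Finset.Icc 1 n₀,
        ((n₀ + 1).choose (k + 1) : ℝ) * (-1) ^ (k + 1) * E (-(μ * k * t ^ ν)) :=
  stmt_13_general ν μ n₀ E t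
end
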